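/- arXiv:2104.01579 — 9 statements merged into one kernel-verified Lean document; each statement's English description precedes it below -/
import Mathlib

section
/- Pathwise existence and uniqueness of the thinning construction (pathwise form of Theorem 2.6): for every horizon T > 0, every configuration P, every baseline intensity μ : ℝ → [0, ∞) and every kernel Φ : ℝ → [0, ∞), there exists exactly one thinning solution for (P, μ, Φ), i.e. exactly one subset S ⊆ P such that for every (t, θ) ∈ P: (t, θ) ∈ S if and only if θ ≤ μ(t) + ∑_{(s, σ) ∈ S, s < t} Φ(t − s). -/
open Finset MeasureTheory

/-- A configuration for horizon `T`: a finite set of marked points in `(0,T] × [0,∞)`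
whose time coordinates are pairwise distinct. -/
def IsConfig (T : ℝ) (P : Finset (ℝ × ℝ)) : Prop :=
  (∀ p ∈ P, 0 < p.1 ∧ p.1 ≤ T ∧ 0 ≤ p.2) ∧
    ∀ p ∈ P, ∀ q ∈ P, p.1 = q.1 → p = q

/-- The intensity `Λ^S(t) = μ(t) + ∑_{(s,σ) ∈ S, s < t} Φ(t − s)`. -/
noncomputable def intensity (μ Φ : ℝ → ℝ) (S : Finset (ℝ × ℝ)) (t : ℝ) : ℝ :=
  μ t + ∑ q ∈ S.filter (fun q => q.1 < t), Φ (t - q.1)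

/-- `S` is a thinning solution for `(P, μ, Φ)`: `S ⊆ P` and a point `(t,θ)` of `P`
belongs to `S` iff `θ ≤ Λ^S(t)`. -/
noncomputable def IsThinningSolution (μ Φ : ℝ → ℝ) (P S : Finset (ℝ × ℝ)) : Prop :=
  S ⊆ P ∧ ∀ p ∈ P, (p ∈ S ↔ p.2 ≤ intensity μ Φ S p.1)

/-- The counting function `H^S(t) = #{(s,σ) ∈ S : s ≤ t}`. -/
noncomputable def countFun (S : Finset (ℝ × ℝ)) (t : ℝ) : ℕ :=
  (S.filter (fun q => q.1 ≤ t)).card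

lemma intensity_insert_of_not_lt (μ Φ : ℝ → ℝ) (S : Finset (ℝ × ℝ)) (a : ℝ × ℝ)
    (t : ℝ) (h : ¬ a.1 < t) :
    intensity μ Φ (insert a S) t = intensity μ Φ S t := by
  classical
  unfold intensity
  rw [Finset.filter_insert, if_neg h]

lemma intensity_erase_of_not_lt (μ Φ : ℝ → ℝ) (S : Finset (ℝ × ℝ)) (a : ℝ × ℝ)
    (t : ℝ) (h : ¬ a.1 < t) :
    intensity μ Φ (S.erase a) t = intensity μ Φ S t := by
  classical
  unfold intensity
  rw [Finset.filter_erase, Finset.erase_eq_of_notMem]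
  simp [h]

/-- Pathwise existence and uniqueness of the thinning construction
(pathwise form of Theorem 2.6): for every horizon `T > 0`, configuration `P`,
nonnegative baseline `μ` and nonnegative kernel `Φ`, there is exactly one
thinning solution for `(P, μ, Φ)`. -/
theorem thinning_existsUnique
    (T : ℝ) (hT : 0 < T)
    (P : Finset (ℝ × ℝ)) (hP : IsConfig T P)
    (μ : ℝ → ℝ) (hμ : ∀ t, 0 ≤ μ t)
    (Φ : ℝ → ℝ) (hΦ : ∀ t, 0 ≤ Φ t) :
    ∃! S : Finset (ℝ × ℝ), IsThinningSolution μ Φ P S := by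
  classical
  clear hT
  revert hP
  induction P using Finset.strongInduction with
  | _ P ih =>
    intro hP
    rcases P.eq_empty_or_nonempty with rfl | hne
    · refine ⟨∅, ⟨Finset.Subset.refl _, by simp⟩, ?_⟩
      rintro S ⟨hS, -⟩
      exact Finset.subset_empty.mp hS
    · obtain ⟨p, hpP, hpmax⟩ := Finset.exists_max_image P (fun q => q.1) hne
      set P' := P.erase p with hP'
      have hPsub : P' ⊂ P := Finset.erase_ssubset hpP
      have hP'cfg : IsConfig T P' := by
        refine ⟨fun q hq => hP.1 q (Finset.mem_of_mem_erase hq), ?_⟩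
        intro a ha b hb hab
        exact hP.2 a (Finset.mem_of_mem_erase ha) b (Finset.mem_of_mem_erase hb) hab
      obtain ⟨S', ⟨hS'sub, hS'iff⟩, hS'uniq⟩ := ih P' hPsub hP'cfg
      have hpnot : p ∉ P' := Finset.notMem_erase p P
      have hpnotS' : p ∉ S' := fun h => hpnot (hS'sub h)
      -- intensities at times of P' don't see p
      have hnotlt : ∀ q ∈ P', ¬ p.1 < q.1 := fun q hq =>
        not_lt.mpr (hpmax q (Finset.mem_of_mem_erase hq))
      -- existence
      by_cases hcond : p.2 ≤ intensity μ Φ S' p.1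
      · refine ⟨insert p S', ⟨?_, ?_⟩, ?_⟩
        · exact Finset.insert_subset hpP (hS'sub.trans (Finset.erase_subset p P))
        · intro q hq
          by_cases hqp : q = p
          · subst hqp
            simp only [Finset.mem_insert, true_or, true_iff]
            rwa [intensity_insert_of_not_lt μ Φ S' q q.1 (lt_irrefl q.1)]
          · have hq' : q ∈ P' := Finset.mem_erase.mpr ⟨hqp, hq⟩
            rw [intensity_insert_of_not_lt μ Φ S' p q.1 (hnotlt q hq')]
            rw [Finset.mem_insert]
            simpa [hqp] using hS'iff q hq'
        · intro S ⟨hSsub, hSiff⟩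
          have hSe : IsThinningSolution μ Φ P' (S.erase p) := by
            refine ⟨Finset.erase_subset_erase p hSsub, ?_⟩
            intro q hq
            have hq2 := hSiff q (Finset.mem_of_mem_erase hq)
            rw [Finset.mem_erase]
            rw [intensity_erase_of_not_lt μ Φ S p q.1 (hnotlt q hq)]
            constructor
            · exact fun h => hq2.mp h.2
            · intro h
              exact ⟨fun hqp => hpnot (hqp ▸ hq), hq2.mpr h⟩
          have heq : S.erase p = S' := hS'uniq _ hSe
          have hint : intensity μ Φ S p.1 = intensity μ Φ S' p.1 := by
            rw [← heq, intensity_erase_of_not_lt μ Φ S p p.1 (lt_irrefl p.1)]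
          have hpS : p ∈ S := (hSiff p hpP).mpr (hint ▸ hcond)
          rw [← heq, Finset.insert_erase hpS]
      · refine ⟨S', ⟨hS'sub.trans (Finset.erase_subset p P), ?_⟩, ?_⟩
        · intro q hq
          by_cases hqp : q = p
          · subst hqp
            simp only [hpnotS', false_iff]
            exact hcond
          · exact hS'iff q (Finset.mem_erase.mpr ⟨hqp, hq⟩)
        · intro S ⟨hSsub, hSiff⟩
          have hSe : IsThinningSolution μ Φ P' (S.erase p) := by
            refine ⟨Finset.erase_subset_erase p hSsub, ?_⟩
            intro q hq
            have hq2 := hSiff q (Finset.mem_of_mem_erase hq)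
            rw [Finset.mem_erase]
            rw [intensity_erase_of_not_lt μ Φ S p q.1 (hnotlt q hq)]
            constructor
            · exact fun h => hq2.mp h.2
            · intro h
              exact ⟨fun hqp => hpnot (hqp ▸ hq), hq2.mpr h⟩
          have heq : S.erase p = S' := hS'uniq _ hSe
          have hint : intensity μ Φ S p.1 = intensity μ Φ S' p.1 := by
            rw [← heq, intensity_erase_of_not_lt μ Φ S p p.1 (lt_irrefl p.1)]
          have hpS : p ∉ S := fun h => hcond (hint ▸ (hSiff p hpP).mp h)
          rw [← heq, Finset.erase_eq_of_notMem hpS]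
end

section
/- Monotonicity of the thinning solution in the baseline and the kernel: let μ₁, μ₂ : ℝ → [0, ∞) and Φ₁, Φ₂ : ℝ → [0, ∞) satisfy μ₁(t) ≤ μ₂(t) and Φ₁(t) ≤ Φ₂(t) for all t, and let P be a configuration. Then the thinning solution S₁ of (P, μ₁, Φ₁) is contained in the thinning solution S₂ of (P, μ₂, Φ₂); consequently H^{S₁}(t) ≤ H^{S₂}(t) and Λ^{S₁}(t) ≤ Λ^{S₂}(t) for all t ∈ (0, T]. -/
open Finset MeasureTheory

/-- Monotonicity of the thinning solution in the baseline and the kernel: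
if `μ₁ ≤ μ₂` and `Φ₁ ≤ Φ₂` pointwise, then the thinning solution `S₁` of
`(P, μ₁, Φ₁)` is contained in the thinning solution `S₂` of `(P, μ₂, Φ₂)`;
consequently `H^{S₁}(t) ≤ H^{S₂}(t)` and `Λ^{S₁}(t) ≤ Λ^{S₂}(t)` for all
`t ∈ (0, T]`. -/
theorem thinning_mono_baseline_kernel
    (T : ℝ) (hT : 0 < T)
    (P : Finset (ℝ × ℝ)) (hP : IsConfig T P)
    (μ₁ μ₂ Φ₁ Φ₂ : ℝ → ℝ)
    (hμ₁ : ∀ t, 0 ≤ μ₁ t) (hΦ₁ : ∀ t, 0 ≤ Φ₁ t)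
    (hμ : ∀ t, μ₁ t ≤ μ₂ t) (hΦ : ∀ t, Φ₁ t ≤ Φ₂ t)
    (S₁ S₂ : Finset (ℝ × ℝ))
    (hS₁ : IsThinningSolution μ₁ Φ₁ P S₁)
    (hS₂ : IsThinningSolution μ₂ Φ₂ P S₂) :
    S₁ ⊆ S₂ ∧
      (∀ t, 0 < t → t ≤ T → countFun S₁ t ≤ countFun S₂ t) ∧
      (∀ t, 0 < t → t ≤ T → intensity μ₁ Φ₁ S₁ t ≤ intensity μ₂ Φ₂ S₂ t) := by
  obtain ⟨hS₁P, hS₁iff⟩ := hS₁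
  obtain ⟨hS₂P, hS₂iff⟩ := hS₂
  have hΦ₂ : ∀ t, 0 ≤ Φ₂ t := fun t => (hΦ₁ t).trans (hΦ t)
  -- key intensity comparison given subset condition up to time t
  have key : ∀ t : ℝ, (∀ q ∈ S₁, q.1 < t → q ∈ S₂) →
      intensity μ₁ Φ₁ S₁ t ≤ intensity μ₂ Φ₂ S₂ t := by
    intro t ht
    unfold intensity
    refine add_le_add (hμ t) ?_
    calc ∑ q ∈ S₁.filter (fun q => q.1 < t), Φ₁ (t - q.1)
        ≤ ∑ q ∈ S₁.filter (fun q => q.1 < t), Φ₂ (t - q.1) :=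
          Finset.sum_le_sum (fun q _ => hΦ _)
      _ ≤ ∑ q ∈ S₂.filter (fun q => q.1 < t), Φ₂ (t - q.1) := by
          refine Finset.sum_le_sum_of_subset_of_nonneg ?_ (fun q _ _ => hΦ₂ _)
          intro q hq
          simp only [Finset.mem_filter] at hq ⊢
          exact ⟨ht q hq.1 hq.2, hq.2⟩
  -- S₁ ⊆ S₂ by strong induction on number of predecessors
  have sub : ∀ n : ℕ, ∀ p ∈ S₁, (S₁.filter (fun q => q.1 < p.1)).card ≤ n → p ∈ S₂ := by
    intro n
    induction n with
    | zero =>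
      intro p hp hc
      have hfe : S₁.filter (fun q => q.1 < p.1) = ∅ := Finset.card_eq_zero.mp (Nat.le_zero.mp hc)
      have ht : ∀ q ∈ S₁, q.1 < p.1 → q ∈ S₂ := by
        intro q hq hlt
        have hqm : q ∈ S₁.filter (fun r => r.1 < p.1) := Finset.mem_filter.mpr ⟨hq, hlt⟩
        rw [hfe] at hqm
        simp at hqm
      have h1 := (hS₁iff p (hS₁P hp)).mp hp
      exact (hS₂iff p (hS₁P hp)).mpr (h1.trans (key p.1 ht))
    | succ n ih =>
      intro p hp hc
      have ht : ∀ q ∈ S₁, q.1 < p.1 → q ∈ S₂ := by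
        intro q hq hlt
        refine ih q hq ?_
        have hss : S₁.filter (fun r => r.1 < q.1) ⊆ S₁.filter (fun r => r.1 < p.1) := by
          intro r hr
          simp only [Finset.mem_filter] at hr ⊢
          exact ⟨hr.1, hr.2.trans hlt⟩
        have hqmem : q ∈ S₁.filter (fun r => r.1 < p.1) := Finset.mem_filter.mpr ⟨hq, hlt⟩
        have hqnot : q ∉ S₁.filter (fun r => r.1 < q.1) := by
          simp [Finset.mem_filter]
        have : (S₁.filter (fun r => r.1 < q.1)).card < (S₁.filter (fun r => r.1 < p.1)).card :=
          Finset.card_lt_card (Finset.ssubset_iff_of_subset hss |>.mpr ⟨q, hqmem, hqnot⟩)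
        omega
      have h1 := (hS₁iff p (hS₁P hp)).mp hp
      exact (hS₂iff p (hS₁P hp)).mpr (h1.trans (key p.1 ht))
  have hsub : S₁ ⊆ S₂ := fun p hp => sub (S₁.filter (fun q => q.1 < p.1)).card p hp le_rfl
  refine ⟨hsub, ?_, ?_⟩
  · intro t _ _
    exact Finset.card_le_card (Finset.filter_subset_filter _ hsub)
  · intro t _ _
    exact key t (fun q hq _ => hsub hq)
end

section
/- Monotonicity of the thinning solution in the driving configuration: let μ, Φ : ℝ → [0, ∞) and let P ⊆ P′ be configurations. Then the thinning solution of (P, μ, Φ) is contained in the thinning solution of (P′, μ, Φ); in particular the counting functions satisfy H^{S(P)}(t) ≤ H^{S(P′)}(t) for all t ∈ [0, T]. -/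
open Finset MeasureTheory

/-! A point of `S` missing from `S'` with the earliest time would see, at that time, an intensity
under `S'` at least as large as under `S` (all earlier points of `S` lie in `S'` and `Φ ≥ 0`),
so it would be retained in `S'` as well. -/

lemma intensity_le_intensity {μ Φ : ℝ → ℝ} (hΦ : ∀ t, 0 ≤ Φ t) {S S' : Finset (ℝ × ℝ)} {t : ℝ}
    (h : ∀ q ∈ S, q.1 < t → q ∈ S') :
    intensity μ Φ S t ≤ intensity μ Φ S' t := by
  refine add_le_add_right (sum_le_sum_of_subset_of_nonneg ?_ fun _ _ _ => hΦ _) _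
  intro q hq
  rw [mem_filter] at hq ⊢
  exact ⟨h q hq.1 hq.2, hq.2⟩

lemma IsThinningSolution.subset_of_subset {μ Φ : ℝ → ℝ} (hΦ : ∀ t, 0 ≤ Φ t)
    {P P' S S' : Finset (ℝ × ℝ)} (hPP' : P ⊆ P')
    (hS : IsThinningSolution μ Φ P S) (hS' : IsThinningSolution μ Φ P' S') : S ⊆ S' := by
  by_contra hne
  obtain ⟨p, hp, hp_min⟩ := exists_min_image (S \ S') Prod.fst (sdiff_nonempty.mpr hne)
  rw [mem_sdiff] at hp
  have hearlier : ∀ q ∈ S, q.1 < p.1 → q ∈ S' := fun q hq hlt => by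
    by_contra hq'
    exact (hp_min q (mem_sdiff.mpr ⟨hq, hq'⟩)).not_gt hlt
  have hpP : p ∈ P := hS.1 hp.1
  have hretained : p.2 ≤ intensity μ Φ S' p.1 :=
    ((hS.2 p hpP).mp hp.1).trans (intensity_le_intensity hΦ hearlier)
  exact hp.2 ((hS'.2 p (hPP' hpP)).mpr hretained)

lemma countFun_mono {S S' : Finset (ℝ × ℝ)} (h : S ⊆ S') (t : ℝ) :
    countFun S t ≤ countFun S' t :=
  card_le_card (filter_subset_filter _ h)

theorem thinning_mono_config_general
    (T : ℝ)
    (μ Φ : ℝ → ℝ) (hΦ : ∀ t, 0 ≤ Φ t)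
    (P P' : Finset (ℝ × ℝ))
    (hPP' : P ⊆ P')
    (S S' : Finset (ℝ × ℝ))
    (hS : IsThinningSolution μ Φ P S)
    (hS' : IsThinningSolution μ Φ P' S') :
    S ⊆ S' ∧ ∀ t, 0 ≤ t → t ≤ T → countFun S t ≤ countFun S' t := by
  have hSS' := hS.subset_of_subset hΦ hPP' hS'
  exact ⟨hSS', fun t _ _ => countFun_mono hSS' t⟩

/-- Monotonicity of the thinning solution in the driving configuration:
if `P ⊆ P'` then the thinning solution of `(P, μ, Φ)` is contained in the
thinning solution of `(P', μ, Φ)`, and the counting functions are ordered on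
`[0, T]`. -/
theorem thinning_mono_config
    (T : ℝ) (hT : 0 < T)
    (μ Φ : ℝ → ℝ) (hμ : ∀ t, 0 ≤ μ t) (hΦ : ∀ t, 0 ≤ Φ t)
    (P P' : Finset (ℝ × ℝ)) (hP : IsConfig T P) (hP' : IsConfig T P')
    (hPP' : P ⊆ P')
    (S S' : Finset (ℝ × ℝ))
    (hS : IsThinningSolution μ Φ P S)
    (hS' : IsThinningSolution μ Φ P' S') :
    S ⊆ S' ∧ ∀ t, 0 ≤ t → t ≤ T → countFun S t ≤ countFun S' t :=
  thinning_mono_config_general T μ Φ hΦ P P' hPP' S S' hS hS'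
end

section
/- Mark invariance of the shifted system (pathwise form of Remark 3.4): let S be the thinning solution of (P, μ, Φ) with intensity Λ^S, let v ∈ (0, T] not be a time coordinate of P, and let θ₀, θ₁ ∈ [0, Λ^S(v)]. Denote by S₀ and S₁ the thinning solutions of (P ∪ {(v, θ₀)}, μ, Φ) and (P ∪ {(v, θ₁)}, μ, Φ) respectively. Then (v, θ₀) ∈ S₀, (v, θ₁) ∈ S₁, and S₀ \ {(v, θ₀)} = S₁ \ {(v, θ₁)}; in particular the set of selected time coordinates is the same for every mark in [0, Λ^S(v)]. -/
open Finset MeasureTheory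

lemma intensity_eq_of_filter_eq (μ Φ : ℝ → ℝ) {S S' : Finset (ℝ × ℝ)} {t : ℝ}
    (h : S.filter (fun q => q.1 < t) = S'.filter (fun q => q.1 < t)) :
    intensity μ Φ S t = intensity μ Φ S' t := by
  unfold intensity; rw [h]

lemma symmdiff_nonempty {A B : Finset (ℝ × ℝ)} (hne : A ≠ B) :
    ((A \ B) ∪ (B \ A)).Nonempty := by
  rw [Finset.nonempty_iff_ne_empty]
  intro h
  rw [Finset.union_eq_empty, Finset.sdiff_eq_empty_iff_subset,
    Finset.sdiff_eq_empty_iff_subset] at h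
  exact hne (Finset.Subset.antisymm h.1 h.2)

/-- Locality of thinning solutions: if the configurations agree strictly before `v`,
so do the solutions. -/
lemma filter_lt_eq (μ Φ : ℝ → ℝ) (P P' S S' : Finset (ℝ × ℝ))
    (hS : IsThinningSolution μ Φ P S) (hS' : IsThinningSolution μ Φ P' S') (v : ℝ)
    (hPP : P.filter (fun p => p.1 < v) = P'.filter (fun p => p.1 < v)) :
    S.filter (fun p => p.1 < v) = S'.filter (fun p => p.1 < v) := by
  by_contra hne
  obtain ⟨p, hpD, hmin⟩ := Finset.exists_min_image _ Prod.fst (symmdiff_nonempty hne)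
  -- p has time < v
  have hpv : p.1 < v := by
    rcases Finset.mem_union.1 hpD with h | h
    · exact (Finset.mem_filter.1 (Finset.mem_sdiff.1 h).1).2
    · exact (Finset.mem_filter.1 (Finset.mem_sdiff.1 h).1).2
  -- filters strictly below p.1 agree
  have hfil : S.filter (fun q => q.1 < p.1) = S'.filter (fun q => q.1 < p.1) := by
    ext q
    simp only [Finset.mem_filter]
    constructor
    · rintro ⟨hqS, hqlt⟩
      have hqA : q ∈ S.filter (fun r => r.1 < v) :=
        Finset.mem_filter.2 ⟨hqS, hqlt.trans hpv⟩
      have hqB : q ∈ S'.filter (fun r => r.1 < v) := by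
        by_contra hq'
        have : q ∈ (S.filter (fun r => r.1 < v) \ S'.filter (fun r => r.1 < v)) ∪
            (S'.filter (fun r => r.1 < v) \ S.filter (fun r => r.1 < v)) :=
          Finset.mem_union.2 (Or.inl (Finset.mem_sdiff.2 ⟨hqA, hq'⟩))
        exact absurd hqlt (not_lt.2 (hmin q this))
      exact ⟨(Finset.mem_filter.1 hqB).1, hqlt⟩
    · rintro ⟨hqS, hqlt⟩
      have hqB : q ∈ S'.filter (fun r => r.1 < v) :=
        Finset.mem_filter.2 ⟨hqS, hqlt.trans hpv⟩
      have hqA : q ∈ S.filter (fun r => r.1 < v) := by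
        by_contra hq'
        have : q ∈ (S.filter (fun r => r.1 < v) \ S'.filter (fun r => r.1 < v)) ∪
            (S'.filter (fun r => r.1 < v) \ S.filter (fun r => r.1 < v)) :=
          Finset.mem_union.2 (Or.inr (Finset.mem_sdiff.2 ⟨hqB, hq'⟩))
        exact absurd hqlt (not_lt.2 (hmin q this))
      exact ⟨(Finset.mem_filter.1 hqA).1, hqlt⟩
  have hint : intensity μ Φ S p.1 = intensity μ Φ S' p.1 :=
    intensity_eq_of_filter_eq μ Φ hfil
  -- p belongs to both P and P'
  have hpPboth : p ∈ P ∧ p ∈ P' := by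
    rcases Finset.mem_union.1 hpD with h | h
    · have hpP : p ∈ P := hS.1 (Finset.mem_filter.1 (Finset.mem_sdiff.1 h).1).1
      have : p ∈ P'.filter (fun r => r.1 < v) := hPP ▸ Finset.mem_filter.2 ⟨hpP, hpv⟩
      exact ⟨hpP, (Finset.mem_filter.1 this).1⟩
    · have hpP' : p ∈ P' := hS'.1 (Finset.mem_filter.1 (Finset.mem_sdiff.1 h).1).1
      have : p ∈ P.filter (fun r => r.1 < v) := hPP ▸ Finset.mem_filter.2 ⟨hpP', hpv⟩
      exact ⟨(Finset.mem_filter.1 this).1, hpP'⟩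
  have hiff : p ∈ S ↔ p ∈ S' := by
    rw [hS.2 p hpPboth.1, hS'.2 p hpPboth.2, hint]
  rcases Finset.mem_union.1 hpD with h | h
  · obtain ⟨h1, h2⟩ := Finset.mem_sdiff.1 h
    exact h2 (Finset.mem_filter.2 ⟨hiff.1 (Finset.mem_filter.1 h1).1, hpv⟩)
  · obtain ⟨h1, h2⟩ := Finset.mem_sdiff.1 h
    exact h2 (Finset.mem_filter.2 ⟨hiff.2 (Finset.mem_filter.1 h1).1, hpv⟩)

lemma sum_filter_erase (Φ : ℝ → ℝ) (S : Finset (ℝ × ℝ)) (a : ℝ × ℝ) (ha : a ∈ S) (t : ℝ) :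
    ∑ q ∈ S.filter (fun q => q.1 < t), Φ (t - q.1)
      = (if a.1 < t then Φ (t - a.1) else 0)
        + ∑ q ∈ (S.erase a).filter (fun q => q.1 < t), Φ (t - q.1) := by
  by_cases h : a.1 < t
  · rw [if_pos h]
    have hset : S.filter (fun q => q.1 < t) = insert a ((S.erase a).filter (fun q => q.1 < t)) := by
      ext q
      simp only [Finset.mem_filter, Finset.mem_insert, Finset.mem_erase]
      constructor
      · rintro ⟨hq, hlt⟩
        by_cases he : q = a
        · exact Or.inl he
        · exact Or.inr ⟨⟨he, hq⟩, hlt⟩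
      · rintro (he | ⟨⟨_, hq⟩, hlt⟩)
        · exact he ▸ ⟨ha, h⟩
        · exact ⟨hq, hlt⟩
    rw [hset, Finset.sum_insert (by simp)]
  · rw [if_neg h, zero_add]
    congr 1
    ext q
    simp only [Finset.mem_filter, Finset.mem_erase]
    constructor
    · rintro ⟨hq, hlt⟩
      exact ⟨⟨fun he => h (he ▸ hlt), hq⟩, hlt⟩
    · rintro ⟨⟨_, hq⟩, hlt⟩
      exact ⟨hq, hlt⟩

/-- Mark invariance of the shifted system (pathwise form of Remark 3.4): adding
a point at a fresh time `v` with any mark `θ₀, θ₁ ∈ [0, Λ^S(v)]` yields the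
same thinning solution apart from the added point itself, which is always
selected. -/
theorem thinning_mark_invariance
    (T : ℝ) (hT : 0 < T)
    (μ Φ : ℝ → ℝ) (hμ : ∀ t, 0 ≤ μ t) (hΦ : ∀ t, 0 ≤ Φ t)
    (P : Finset (ℝ × ℝ)) (hP : IsConfig T P)
    (S : Finset (ℝ × ℝ)) (hS : IsThinningSolution μ Φ P S)
    (v : ℝ) (hv0 : 0 < v) (hvT : v ≤ T)
    (hvfresh : ∀ p ∈ P, p.1 ≠ v)
    (θ₀ θ₁ : ℝ)
    (hθ₀ : 0 ≤ θ₀) (hθ₀' : θ₀ ≤ intensity μ Φ S v)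
    (hθ₁ : 0 ≤ θ₁) (hθ₁' : θ₁ ≤ intensity μ Φ S v)
    (S₀ S₁ : Finset (ℝ × ℝ))
    (hS₀ : IsThinningSolution μ Φ (insert (v, θ₀) P) S₀)
    (hS₁ : IsThinningSolution μ Φ (insert (v, θ₁) P) S₁) :
    (v, θ₀) ∈ S₀ ∧ (v, θ₁) ∈ S₁ ∧ S₀.erase (v, θ₀) = S₁.erase (v, θ₁) := by
  -- Step 1: the added point is always selected
  have hPP₀ : P.filter (fun p => p.1 < v) = (insert (v, θ₀) P).filter (fun p => p.1 < v) := by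
    rw [Finset.filter_insert, if_neg (by simp)]
  have hPP₁ : P.filter (fun p => p.1 < v) = (insert (v, θ₁) P).filter (fun p => p.1 < v) := by
    rw [Finset.filter_insert, if_neg (by simp)]
  have hF₀ := filter_lt_eq μ Φ P _ S S₀ hS hS₀ v hPP₀
  have hF₁ := filter_lt_eq μ Φ P _ S S₁ hS hS₁ v hPP₁
  have hI₀ : intensity μ Φ S₀ v = intensity μ Φ S v :=
    intensity_eq_of_filter_eq μ Φ hF₀.symm
  have hI₁ : intensity μ Φ S₁ v = intensity μ Φ S v :=
    intensity_eq_of_filter_eq μ Φ hF₁.symm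
  have hmem₀ : (v, θ₀) ∈ S₀ :=
    (hS₀.2 _ (Finset.mem_insert_self _ _)).2 (by simpa [hI₀] using hθ₀')
  have hmem₁ : (v, θ₁) ∈ S₁ :=
    (hS₁.2 _ (Finset.mem_insert_self _ _)).2 (by simpa [hI₁] using hθ₁')
  refine ⟨hmem₀, hmem₁, ?_⟩
  -- Step 2: the erased solutions coincide
  set E₀ := S₀.erase (v, θ₀) with hE₀
  set E₁ := S₁.erase (v, θ₁) with hE₁
  by_contra hne
  obtain ⟨p, hpD, hmin⟩ := Finset.exists_min_image _ Prod.fst (symmdiff_nonempty hne)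
  -- p belongs to P
  have hpP : p ∈ P := by
    rcases Finset.mem_union.1 hpD with h | h
    · obtain ⟨h1, _⟩ := Finset.mem_sdiff.1 h
      rcases Finset.mem_insert.1 (hS₀.1 (Finset.mem_of_mem_erase h1)) with he | hm
      · exact absurd he (Finset.ne_of_mem_erase h1)
      · exact hm
    · obtain ⟨h1, _⟩ := Finset.mem_sdiff.1 h
      rcases Finset.mem_insert.1 (hS₁.1 (Finset.mem_of_mem_erase h1)) with he | hm
      · exact absurd he (Finset.ne_of_mem_erase h1)
      · exact hm
  have hpv : p.1 ≠ v := hvfresh p hpP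
  -- erased filters strictly below p.1 agree
  have hfil : E₀.filter (fun q => q.1 < p.1) = E₁.filter (fun q => q.1 < p.1) := by
    ext q
    simp only [Finset.mem_filter]
    constructor
    · rintro ⟨hq, hlt⟩
      refine ⟨?_, hlt⟩
      by_contra hq'
      exact absurd hlt (not_lt.2 (hmin q (Finset.mem_union.2
        (Or.inl (Finset.mem_sdiff.2 ⟨hq, hq'⟩)))))
    · rintro ⟨hq, hlt⟩
      refine ⟨?_, hlt⟩
      by_contra hq'
      exact absurd hlt (not_lt.2 (hmin q (Finset.mem_union.2
        (Or.inr (Finset.mem_sdiff.2 ⟨hq, hq'⟩)))))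
  -- intensities agree at p.1
  have hint : intensity μ Φ S₀ p.1 = intensity μ Φ S₁ p.1 := by
    unfold intensity
    rw [sum_filter_erase Φ S₀ (v, θ₀) hmem₀ p.1, sum_filter_erase Φ S₁ (v, θ₁) hmem₁ p.1,
      ← hE₀, ← hE₁, hfil]
  have hiff : p ∈ S₀ ↔ p ∈ S₁ := by
    rw [hS₀.2 p (Finset.mem_insert_of_mem hpP), hS₁.2 p (Finset.mem_insert_of_mem hpP), hint]
  have hne₀ : p ≠ (v, θ₀) := fun he => hpv (by rw [he])
  have hne₁ : p ≠ (v, θ₁) := fun he => hpv (by rw [he])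
  rcases Finset.mem_union.1 hpD with h | h
  · obtain ⟨h1, h2⟩ := Finset.mem_sdiff.1 h
    exact h2 (Finset.mem_erase.2 ⟨hne₁, hiff.1 (Finset.mem_of_mem_erase h1)⟩)
  · obtain ⟨h1, h2⟩ := Finset.mem_sdiff.1 h
    exact h2 (Finset.mem_erase.2 ⟨hne₀, hiff.2 (Finset.mem_of_mem_erase h1)⟩)
end

section
/- One-shift identity (pathwise form of Lemma 3.6): let μ, Φ : ℝ → [0, ∞), let P be a configuration and let v ∈ (0, T] not be a time coordinate of P. Then the thinning solution of (P ∪ {(v, 0)}, μ, Φ) equals {(v, 0)} ∪ S̃, where S̃ is the thinning solution of (P, μ_v, Φ) with shifted baseline μ_v(t) := μ(t) + 1_{t > v} Φ(t − v). In words: adding the point (v, 0), which is always accepted, to the driving configuration produces exactly the one-shift system in which a jump is forced at time v and the excitation Φ(· − v) is added to the baseline after v. -/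
open Finset MeasureTheory

/-- One-shift identity (pathwise form of Lemma 3.6): the thinning solution of
`(P ∪ {(v,0)}, μ, Φ)` equals `{(v,0)} ∪ S̃`, where `S̃` is the thinning
solution of `(P, μ_v, Φ)` with shifted baseline
`μ_v(t) = μ(t) + 1_{t > v} Φ(t − v)`. -/
theorem thinning_one_shift
    (T : ℝ) (hT : 0 < T)
    (μ Φ : ℝ → ℝ) (hμ : ∀ t, 0 ≤ μ t) (hΦ : ∀ t, 0 ≤ Φ t)
    (P : Finset (ℝ × ℝ)) (hP : IsConfig T P)
    (v : ℝ) (hv0 : 0 < v) (hvT : v ≤ T)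
    (hvfresh : ∀ p ∈ P, p.1 ≠ v)
    (S : Finset (ℝ × ℝ))
    (hS : IsThinningSolution μ Φ (insert (v, 0) P) S)
    (Stilde : Finset (ℝ × ℝ))
    (hStilde : IsThinningSolution
      (fun t => μ t + if v < t then Φ (t - v) else 0) Φ P Stilde) :
    S = insert (v, 0) Stilde := by
  have hvP : (v, (0:ℝ)) ∉ P := fun h => hvfresh _ h rfl
  have hSt : (v, (0:ℝ)) ∉ Stilde := fun h => hvP (hStilde.1 h)
  -- intensity of insert (v,0) Stilde w.r.t. μ equals intensity of Stilde w.r.t. shifted μ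
  have hint : ∀ t, intensity μ Φ (insert (v, 0) Stilde) t
      = intensity (fun t => μ t + if v < t then Φ (t - v) else 0) Φ Stilde t := by
    intro t
    unfold intensity
    rw [Finset.filter_insert]
    by_cases h : v < t
    · simp only [h, if_pos]
      rw [Finset.sum_insert (by simp [hSt])]
      ring
    · simp only [h, if_neg, if_false, not_false_iff]
      ring
  -- insert (v,0) Stilde is a thinning solution for (insert (v,0) P, μ, Φ)
  have hB : IsThinningSolution μ Φ (insert (v, 0) P) (insert (v, 0) Stilde) := by
    constructor
    · exact Finset.insert_subset_insert _ hStilde.1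
    · intro p hp
      rcases Finset.mem_insert.mp hp with rfl | hpP
      · simp only [Finset.mem_insert_self, true_iff]
        have : (0:ℝ) ≤ ∑ q ∈ (insert ((v:ℝ), (0:ℝ)) Stilde).filter (fun q => q.1 < v),
            Φ (v - q.1) := Finset.sum_nonneg fun q _ => hΦ _
        unfold intensity
        exact add_nonneg (hμ v) this
      · have hpne : p ≠ (v, 0) := fun h => hvfresh p hpP (by rw [h])
        rw [Finset.mem_insert]
        simp only [hpne, false_or]
        rw [hint]
        exact hStilde.2 p hpP
  -- uniqueness of thinning solutions
  by_contra hne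
  have hne' : ((S \ insert (v, 0) Stilde) ∪ (insert (v, 0) Stilde \ S)).Nonempty := by
    rw [Finset.nonempty_iff_ne_empty]
    intro h
    rw [Finset.union_eq_empty, Finset.sdiff_eq_empty_iff_subset,
      Finset.sdiff_eq_empty_iff_subset] at h
    exact hne (Finset.Subset.antisymm h.1 h.2)
  obtain ⟨p, hpD, hmin⟩ := Finset.exists_min_image _ Prod.fst hne'
  have hfilter : S.filter (fun q => q.1 < p.1)
      = (insert (v, 0) Stilde).filter (fun q => q.1 < p.1) := by
    ext q
    simp only [Finset.mem_filter]
    constructor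
    · rintro ⟨hq, hlt⟩
      refine ⟨?_, hlt⟩
      by_contra hq2
      have : q ∈ (S \ insert (v, 0) Stilde) ∪ (insert (v, 0) Stilde \ S) := by
        simp [hq, hq2]
      exact absurd hlt (not_lt.mpr (hmin q this))
    · rintro ⟨hq, hlt⟩
      refine ⟨?_, hlt⟩
      by_contra hq2
      have : q ∈ (S \ insert (v, 0) Stilde) ∪ (insert (v, 0) Stilde \ S) := by
        simp [hq, hq2]
      exact absurd hlt (not_lt.mpr (hmin q this))
  have hintp : intensity μ Φ S p.1 = intensity μ Φ (insert (v, 0) Stilde) p.1 := by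
    unfold intensity; rw [hfilter]
  rcases Finset.mem_union.mp hpD with hp | hp
  · rcases Finset.mem_sdiff.mp hp with ⟨hp1, hp2⟩
    have hpP : p ∈ insert (v, 0) P := hS.1 hp1
    have h1 := (hS.2 p hpP).mp hp1
    rw [hintp] at h1
    exact hp2 ((hB.2 p hpP).mpr h1)
  · rcases Finset.mem_sdiff.mp hp with ⟨hp1, hp2⟩
    have hpP : p ∈ insert (v, 0) P := hB.1 hp1
    have h1 := (hB.2 p hpP).mp hp1
    rw [← hintp] at h1
    exact hp2 ((hS.2 p hpP).mpr h1)
end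

section
/- Multi-shift identity (pathwise form of Proposition 3.7): let μ, Φ : ℝ → [0, ∞), let P be a configuration, let n ≥ 1 and 0 < v_n < ⋯ < v_1 < T, none of which is a time coordinate of P. Then the thinning solution of (P ∪ {(v_1, 0), …, (v_n, 0)}, μ, Φ) equals {(v_1, 0), …, (v_n, 0)} ∪ S′, where S′ is the thinning solution of (P, μ^{v_n,…,v_1}, Φ). Hence adding the n points (v_k, 0) to the driving configuration yields exactly the multi-shifted system, which is also the n-fold composition of the one-shift operation. -/
open Finset MeasureTheory

/-- Thinning solutions are unique. -/
lemma thinning_unique (μ Φ : ℝ → ℝ) (Q S₁ S₂ : Finset (ℝ × ℝ))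
    (h₁ : IsThinningSolution μ Φ Q S₁) (h₂ : IsThinningSolution μ Φ Q S₂) :
    S₁ = S₂ := by
  by_contra hne
  have hD : ((S₁ \ S₂) ∪ (S₂ \ S₁)).Nonempty := by
    rw [Finset.nonempty_iff_ne_empty]
    intro h
    apply hne
    have h1 : S₁ \ S₂ = ∅ := by
      rw [Finset.union_eq_empty] at h; exact h.1
    have h2 : S₂ \ S₁ = ∅ := by
      rw [Finset.union_eq_empty] at h; exact h.2
    rw [Finset.sdiff_eq_empty_iff_subset] at h1 h2
    exact Finset.Subset.antisymm h1 h2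
  obtain ⟨p, hpD, hpmin⟩ := Finset.exists_min_image _ Prod.fst hD
  have hfilt : S₁.filter (fun q => q.1 < p.1) = S₂.filter (fun q => q.1 < p.1) := by
    ext q
    simp only [Finset.mem_filter]
    constructor
    · rintro ⟨hq1, hqlt⟩
      refine ⟨?_, hqlt⟩
      by_contra hq2
      have : q ∈ (S₁ \ S₂) ∪ (S₂ \ S₁) := by
        simp [Finset.mem_union, Finset.mem_sdiff, hq1, hq2]
      exact absurd hqlt (not_lt.2 (hpmin q this))
    · rintro ⟨hq2, hqlt⟩
      refine ⟨?_, hqlt⟩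
      by_contra hq1
      have : q ∈ (S₁ \ S₂) ∪ (S₂ \ S₁) := by
        simp [Finset.mem_union, Finset.mem_sdiff, hq1, hq2]
      exact absurd hqlt (not_lt.2 (hpmin q this))
  have hint : intensity μ Φ S₁ p.1 = intensity μ Φ S₂ p.1 := by
    unfold intensity; rw [hfilt]
  have hpQ : p ∈ Q := by
    rcases Finset.mem_union.1 hpD with h | h
    · exact h₁.1 (Finset.mem_sdiff.1 h).1
    · exact h₂.1 (Finset.mem_sdiff.1 h).1
  have hiff : p ∈ S₁ ↔ p ∈ S₂ := by
    rw [h₁.2 p hpQ, h₂.2 p hpQ, hint]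
  rcases Finset.mem_union.1 hpD with h | h
  · obtain ⟨h1, h2⟩ := Finset.mem_sdiff.1 h
    exact h2 (hiff.1 h1)
  · obtain ⟨h1, h2⟩ := Finset.mem_sdiff.1 h
    exact h2 (hiff.2 h1)

/-- Multi-shift identity (pathwise form of Proposition 3.7): for fresh times
`0 < v_n < ⋯ < v_1 < T` (here `v : Fin n → ℝ` with `v 0 = v_1, …,
v (n-1) = v_n`, so `StrictAnti v`), the thinning solution of
`(P ∪ {(v_1,0),…,(v_n,0)}, μ, Φ)` equals `{(v_1,0),…,(v_n,0)} ∪ S'` where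
`S'` is the thinning solution of `(P, μ^{v_n,…,v_1}, Φ)` with
`μ^{v_n,…,v_1}(t) = μ(t) + ∑_k 1_{t > v_k} Φ(t − v_k)`. -/
theorem thinning_multi_shift
    (T : ℝ) (hT : 0 < T)
    (μ Φ : ℝ → ℝ) (hμ : ∀ t, 0 ≤ μ t) (hΦ : ∀ t, 0 ≤ Φ t)
    (P : Finset (ℝ × ℝ)) (hP : IsConfig T P)
    (n : ℕ) (hn : 1 ≤ n)
    (v : Fin n → ℝ) (hv : StrictAnti v)
    (hv0 : ∀ k, 0 < v k) (hvT : ∀ k, v k < T)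
    (hvfresh : ∀ p ∈ P, ∀ k, p.1 ≠ v k)
    (S : Finset (ℝ × ℝ))
    (hS : IsThinningSolution μ Φ
      (P ∪ Finset.image (fun k => (v k, (0:ℝ))) Finset.univ) S)
    (S' : Finset (ℝ × ℝ))
    (hS' : IsThinningSolution
      (fun t => μ t + ∑ k : Fin n, if v k < t then Φ (t - v k) else 0) Φ P S') :
    S = Finset.image (fun k => (v k, (0:ℝ))) Finset.univ ∪ S' := by
  set I : Finset (ℝ × ℝ) := Finset.image (fun k => (v k, (0:ℝ))) Finset.univ with hI
  have hvinj : Function.Injective v := hv.injective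
  have hnotI : ∀ p ∈ P, p ∉ I := by
    intro p hp hpI
    obtain ⟨k, -, hk⟩ := Finset.mem_image.1 hpI
    exact hvfresh p hp k (by rw [← hk])
  have hdisj : Disjoint I S' := by
    rw [Finset.disjoint_right]
    intro q hq
    exact hnotI q (hS'.1 hq)
  -- the key intensity identity
  have hint : ∀ t, intensity μ Φ (I ∪ S') t =
      intensity (fun t => μ t + ∑ k : Fin n, if v k < t then Φ (t - v k) else 0) Φ S' t := by
    intro t
    unfold intensity
    rw [Finset.filter_union, Finset.sum_union
      (Finset.disjoint_filter_filter hdisj)]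
    have hIsum : ∑ q ∈ I.filter (fun q => q.1 < t), Φ (t - q.1)
        = ∑ k : Fin n, if v k < t then Φ (t - v k) else 0 := by
      rw [hI, Finset.filter_image, Finset.sum_image (fun a _ b _ h => by
        exact hvinj (congrArg Prod.fst h))]
      rw [Finset.sum_filter]
    rw [hIsum]; ring
  -- I ∪ S' is a thinning solution of (P ∪ I, μ, Φ)
  have hTS : IsThinningSolution μ Φ (P ∪ I) (I ∪ S') := by
    constructor
    · exact Finset.union_subset (Finset.subset_union_right)
        (hS'.1.trans Finset.subset_union_left)
    · intro p hp
      rcases Finset.mem_union.1 hp with hpP | hpI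
      · have hpnI : p ∉ I := hnotI p hpP
        have : p ∈ I ∪ S' ↔ p ∈ S' := by
          simp [Finset.mem_union, hpnI]
        rw [this, hS'.2 p hpP, hint p.1]
      · constructor
        · intro _
          obtain ⟨k, -, hk⟩ := Finset.mem_image.1 hpI
          have hp2 : p.2 = 0 := by rw [← hk]
          rw [hp2]
          unfold intensity
          have : (0:ℝ) ≤ ∑ q ∈ (I ∪ S').filter (fun q => q.1 < p.1), Φ (p.1 - q.1) :=
            Finset.sum_nonneg fun q _ => hΦ _
          linarith [hμ p.1]
        · intro _
          exact Finset.mem_union_left _ hpI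
  exact thinning_unique μ Φ (P ∪ I) S (I ∪ S') hS hTS
end

section
/- Lower comparison for the multi-shifted process (key pathwise inequality in the proof of Proposition 4.6): let μ ≥ 0 be a constant baseline, Φ : ℝ → [0, ∞), P a configuration, and 0 < v_n < ⋯ < v_1 < T none of which is a time coordinate of P. Then the thinning solution of (P, μ, Φ) is contained in the multi-shifted solution S′ (the thinning solution of (P, μ^{v_n,…,v_1}, Φ)), and consequently the multi-shifted counting function satisfies H^{v_n,…,v_1}(t) ≥ #{k : v_k ≤ t} + H^{S(P,μ,Φ)}(t) for every t ∈ [0, T]; in particular H^{v_n,…,v_1}(T) ≥ n + H^{S(P,μ,Φ)}(T). -/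
open Finset MeasureTheory

/-- Lower comparison for the multi-shifted process (key pathwise inequality in
the proof of Proposition 4.6): with constant baseline `μ ≥ 0`, the thinning
solution of `(P, μ, Φ)` is contained in the multi-shifted solution `S'`, and
the multi-shifted counting function
`H^{v_n,…,v_1}(t) = #{k : v_k ≤ t} + H^{S'}(t)` satisfies
`H^{v_n,…,v_1}(t) ≥ #{k : v_k ≤ t} + H^{S}(t)` on `[0,T]`; in particular
`H^{v_n,…,v_1}(T) ≥ n + H^{S}(T)`. -/
theorem thinning_multi_shift_lower
    (T : ℝ) (hT : 0 < T)
    (μ : ℝ) (hμ : 0 ≤ μ)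
    (Φ : ℝ → ℝ) (hΦ : ∀ t, 0 ≤ Φ t)
    (P : Finset (ℝ × ℝ)) (hP : IsConfig T P)
    (n : ℕ) (hn : 1 ≤ n)
    (v : Fin n → ℝ) (hv : StrictAnti v)
    (hv0 : ∀ k, 0 < v k) (hvT : ∀ k, v k < T)
    (hvfresh : ∀ p ∈ P, ∀ k, p.1 ≠ v k)
    (S : Finset (ℝ × ℝ))
    (hS : IsThinningSolution (fun _ => μ) Φ P S)
    (S' : Finset (ℝ × ℝ))
    (hS' : IsThinningSolution
      (fun t => μ + ∑ k : Fin n, if v k < t then Φ (t - v k) else 0) Φ P S') :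
    S ⊆ S' ∧
      (∀ t, 0 ≤ t → t ≤ T →
        (Finset.univ.filter (fun k : Fin n => v k ≤ t)).card + countFun S t ≤
          (Finset.univ.filter (fun k : Fin n => v k ≤ t)).card + countFun S' t) ∧
      n + countFun S T ≤
        (Finset.univ.filter (fun k : Fin n => v k ≤ T)).card + countFun S' T := by

  have hsub : S ⊆ S' := by
    by_contra hns
    have hne : (S.filter (fun p => p ∉ S')).Nonempty := by
      rw [Finset.filter_nonempty_iff]
      simpa [Finset.subset_iff] using hns
    obtain ⟨p, hpmem, hpmin⟩ := Finset.exists_min_image _ (fun q => q.1) hne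
    rw [Finset.mem_filter] at hpmem
    obtain ⟨hpS, hpS'⟩ := hpmem
    have hpP : p ∈ P := hS.1 hpS
    -- all earlier points of S are in S'
    have hearly : S.filter (fun q => q.1 < p.1) ⊆ S'.filter (fun q => q.1 < p.1) := by
      intro q hq
      rw [Finset.mem_filter] at hq ⊢
      refine ⟨?_, hq.2⟩
      by_contra hq'
      have := hpmin q (Finset.mem_filter.mpr ⟨hq.1, hq'⟩)
      exact absurd hq.2 (not_lt.mpr this)
    have hint : intensity (fun _ => μ) Φ S p.1 ≤
        intensity (fun t => μ + ∑ k : Fin n, if v k < t then Φ (t - v k) else 0) Φ S' p.1 := by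
      unfold intensity
      have h1 : μ ≤ μ + ∑ k : Fin n, if v k < p.1 then Φ (p.1 - v k) else 0 := by
        have : 0 ≤ ∑ k : Fin n, if v k < p.1 then Φ (p.1 - v k) else 0 :=
          Finset.sum_nonneg fun k _ => by by_cases h : v k < p.1 <;> simp [h, hΦ]
        linarith
      refine add_le_add h1 ?_
      exact Finset.sum_le_sum_of_subset_of_nonneg hearly fun q _ _ => hΦ _
    have hp2 : p.2 ≤ intensity (fun _ => μ) Φ S p.1 := (hS.2 p hpP).mp hpS
    exact hpS' ((hS'.2 p hpP).mpr (le_trans hp2 hint))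
  have hcf : ∀ t : ℝ, countFun S t ≤ countFun S' t := fun t =>
    Finset.card_le_card (Finset.filter_subset_filter _ hsub)
  refine ⟨hsub, fun t _ _ => Nat.add_le_add_left (hcf t) _, ?_⟩
  have hall : (Finset.univ.filter (fun k : Fin n => v k ≤ T)).card = n := by
    rw [Finset.filter_true_of_mem fun k _ => (hvT k).le]
    simp
  rw [hall]
  exact Nat.add_le_add_left (hcf T) n
end

section
/- Upper comparison for the multi-shifted process (pathwise form of Lemma 5.4): assume Φ : ℝ → [0, ∞) vanishes on (−∞, 0) and is nonincreasing on [0, ∞), let μ ≥ 0 be a constant baseline, P a configuration, and 0 < v_n < ⋯ < v_1 < T none of which is a time coordinate of P. Then the multi-shifted solution S′ (the thinning solution of (P, μ^{v_n,…,v_1}, Φ)) is contained in the thinning solution of (P, μ + nΦ(0), Φ) with constant baseline μ + nΦ(0). Consequently H^{v_n,…,v_1}(t) ≤ n + H^{μ+nΦ(0)}(t) for all t ∈ [0, T], where H^{μ+nΦ(0)} is the counting function of the thinning solution of (P, μ + nΦ(0), Φ), and every selected time of the multi-shifted system other than v_1, …, v_n is a selected time of the system with constant baseline μ + nΦ(0).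 -/
open Finset MeasureTheory

/-- Upper comparison for the multi-shifted process (pathwise form of
Lemma 5.4): if `Φ` vanishes on `(−∞,0)` and is nonincreasing on `[0,∞)`,
the multi-shifted solution `S'` is contained in the thinning solution of
`(P, μ + nΦ(0), Φ)`; consequently
`H^{v_n,…,v_1}(t) = #{k : v_k ≤ t} + H^{S'}(t) ≤ n + H^{μ+nΦ(0)}(t)` on
`[0,T]`, and every selected time of the multi-shifted system other than
`v_1,…,v_n` is a selected time of the system with constant baseline
`μ + nΦ(0)`. -/
theorem thinning_multi_shift_upper
    (T : ℝ) (hT : 0 < T)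
    (μ : ℝ) (hμ : 0 ≤ μ)
    (Φ : ℝ → ℝ) (hΦ : ∀ t, 0 ≤ Φ t)
    (hΦneg : ∀ x, x < 0 → Φ x = 0) (hΦanti : AntitoneOn Φ (Set.Ici 0))
    (P : Finset (ℝ × ℝ)) (hP : IsConfig T P)
    (n : ℕ) (hn : 1 ≤ n)
    (v : Fin n → ℝ) (hv : StrictAnti v)
    (hv0 : ∀ k, 0 < v k) (hvT : ∀ k, v k < T)
    (hvfresh : ∀ p ∈ P, ∀ k, p.1 ≠ v k)
    (S' : Finset (ℝ × ℝ))
    (hS' : IsThinningSolution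
      (fun t => μ + ∑ k : Fin n, if v k < t then Φ (t - v k) else 0) Φ P S')
    (S'' : Finset (ℝ × ℝ))
    (hS'' : IsThinningSolution (fun _ => μ + n * Φ 0) Φ P S'') :
    S' ⊆ S'' ∧
      (∀ t, 0 ≤ t → t ≤ T →
        (Finset.univ.filter (fun k : Fin n => v k ≤ t)).card + countFun S' t ≤
          n + countFun S'' t) ∧
      ∀ p ∈ S', (∀ k, p.1 ≠ v k) → p ∈ S'' := by
  obtain ⟨hsub', hiff'⟩ := hS'
  obtain ⟨hsub'', hiff''⟩ := hS''
  have hbase : ∀ t : ℝ,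
      (μ + ∑ k : Fin n, if v k < t then Φ (t - v k) else 0) ≤ μ + n * Φ 0 := by
    intro t
    have hsum : (∑ k : Fin n, if v k < t then Φ (t - v k) else 0) ≤ ∑ _k : Fin n, Φ 0 := by
      apply Finset.sum_le_sum
      intro k _
      split_ifs with h
      · exact hΦanti (Set.mem_Ici.mpr le_rfl)
          (Set.mem_Ici.mpr (sub_nonneg.mpr h.le))
          (sub_nonneg.mpr h.le)
      · exact hΦ 0
    have : (∑ _k : Fin n, Φ 0) = n * Φ 0 := by
      simp [Finset.sum_const, nsmul_eq_mul]
    linarith [hsum, this.le]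
  have key : ∀ m : ℕ, ∀ p ∈ S', (S'.filter (fun q => q.1 < p.1)).card < m → p ∈ S'' := by
    intro m
    induction m with
    | zero => intro p hp h; omega
    | succ m ih =>
      intro p hp hcard
      have hsubF : S'.filter (fun q => q.1 < p.1) ⊆ S''.filter (fun q => q.1 < p.1) := by
        intro q hq
        simp only [Finset.mem_filter] at hq ⊢
        refine ⟨ih q hq.1 ?_, hq.2⟩
        have hss : S'.filter (fun r => r.1 < q.1) ⊂ S'.filter (fun r => r.1 < p.1) := by
          rw [Finset.ssubset_iff_of_subset]
          · exact ⟨q, Finset.mem_filter.mpr ⟨hq.1, hq.2⟩, by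
              simp only [Finset.mem_filter]; exact fun h => lt_irrefl _ h.2⟩
          · intro r hr
            simp only [Finset.mem_filter] at hr ⊢
            exact ⟨hr.1, hr.2.trans hq.2⟩
        have := Finset.card_lt_card hss
        omega
      have h1 : p.2 ≤ intensity
          (fun t => μ + ∑ k : Fin n, if v k < t then Φ (t - v k) else 0) Φ S' p.1 :=
        (hiff' p (hsub' hp)).mp hp
      have h2 : (∑ q ∈ S'.filter (fun q => q.1 < p.1), Φ (p.1 - q.1)) ≤
          ∑ q ∈ S''.filter (fun q => q.1 < p.1), Φ (p.1 - q.1) :=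
        Finset.sum_le_sum_of_subset_of_nonneg hsubF (fun _ _ _ => hΦ _)
      refine (hiff'' p (hsub' hp)).mpr ?_
      unfold intensity at h1 ⊢
      have := hbase p.1
      dsimp only at h1 this ⊢
      linarith
  have hSS : S' ⊆ S'' := fun p hp => key _ p hp (Nat.lt_succ_self _)
  refine ⟨hSS, ?_, fun p hp _ => hSS hp⟩
  intro t _ _
  have h1 : (Finset.univ.filter (fun k : Fin n => v k ≤ t)).card ≤ n := by
    simpa using Finset.card_filter_le Finset.univ (fun k : Fin n => v k ≤ t)
  have h2 : countFun S' t ≤ countFun S'' t :=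
    Finset.card_le_card (Finset.filter_subset_filter _ hSS)
  omega
end

section
/- Integral mark-invariance identity (pathwise form of Lemma 3.8): let S be the thinning solution of (P, μ, Φ) with intensity Λ^S, let v ∈ (0, T] not be a time coordinate of P, and let G be any real-valued function on finite subsets of (0, T]. For θ ≥ 0 denote by S_θ the thinning solution of (P ∪ {(v, θ)}, μ, Φ) and by τ(S_θ) its set of selected time coordinates. Then ∫₀^∞ 1_{θ ≤ Λ^S(v)} G(τ(S_θ)) dθ = Λ^S(v) · G(τ(S_0)). -/
open Finset MeasureTheory

/-!
Thinning solutions are unique: at the earliest point where two solutions disagree, both have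
the same past and hence the same intensity. Adding a point at the fresh time `v` does not change
the past before `v`, so every `S_θ` has intensity `Λ^S(v)` at `v`. For `θ ≤ Λ^S(v)` the point
`(v, θ)` is therefore selected, and swapping the marks `θ` and `0` at `v` carries `S_θ` to a
solution for the configuration with mark `0`, that is to `S_0`, without moving any time.
The integrand is thus `G(τ(S_0))` on `[0, Λ^S(v)]` and `0` beyond.
-/

section

variable {μ Φ : ℝ → ℝ} {P S S' S₁ S₂ : Finset (ℝ × ℝ)}

theorem intensity_congr_of_filter_eq {t : ℝ}
    (h : S₁.filter (fun q => q.1 < t) = S₂.filter (fun q => q.1 < t)) :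
    intensity μ Φ S₁ t = intensity μ Φ S₂ t := by
  rw [intensity, intensity, h]

theorem intensity_filter_lt_of_le {s t : ℝ} (hst : s ≤ t) :
    intensity μ Φ (S.filter (fun q => q.1 < t)) s = intensity μ Φ S s :=
  intensity_congr_of_filter_eq <| by
    rw [filter_filter]
    exact filter_congr fun q _ => and_iff_right_of_imp fun hq => hq.trans_le hst

theorem intensity_nonneg (hμ : ∀ t, 0 ≤ μ t) (hΦ : ∀ t, 0 ≤ Φ t) (S : Finset (ℝ × ℝ)) (t : ℝ) :
    0 ≤ intensity μ Φ S t :=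
  add_nonneg (hμ t) (sum_nonneg fun _ _ => hΦ _)

theorem intensity_map (e : ℝ × ℝ ↪ ℝ × ℝ) (he : ∀ p, (e p).1 = p.1) :
    intensity μ Φ (S.map e) = intensity μ Φ S := by
  funext t
  simp only [intensity, filter_map, sum_map, Function.comp_def, he]

namespace IsThinningSolution

theorem filter_lt (hS : IsThinningSolution μ Φ P S) (t : ℝ) :
    IsThinningSolution μ Φ (P.filter (fun q => q.1 < t)) (S.filter (fun q => q.1 < t)) := by
  refine ⟨filter_subset_filter _ hS.1, fun p hp => ?_⟩
  obtain ⟨hpP, hpt⟩ := mem_filter.1 hp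
  rw [intensity_filter_lt_of_le hpt.le, mem_filter, hS.2 p hpP, and_iff_left hpt]

theorem unique (h₁ : IsThinningSolution μ Φ P S₁) (h₂ : IsThinningSolution μ Φ P S₂) :
    S₁ = S₂ := by
  classical
  by_contra hne
  set D := P.filter (fun p => ¬(p ∈ S₁ ↔ p ∈ S₂))
  have hD : D.Nonempty := by
    obtain ⟨p, hp⟩ : ∃ p, ¬(p ∈ S₁ ↔ p ∈ S₂) := by simpa [Finset.ext_iff] using hne
    have hpP : p ∈ P := by
      by_contra hpP
      exact hp (iff_of_false (fun h => hpP (h₁.1 h)) (fun h => hpP (h₂.1 h)))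
    exact ⟨p, mem_filter.2 ⟨hpP, hp⟩⟩
  obtain ⟨p, hpD, hmin⟩ := D.exists_min_image Prod.fst hD
  obtain ⟨hpP, hp⟩ := mem_filter.1 hpD
  have hpast : S₁.filter (fun q => q.1 < p.1) = S₂.filter (fun q => q.1 < p.1) := by
    have hagree : ∀ q ∈ P, q.1 < p.1 → (q ∈ S₁ ↔ q ∈ S₂) := fun q hq hqp => by
      by_contra hq'
      exact (hmin q (mem_filter.2 ⟨hq, hq'⟩)).not_gt hqp
    ext q
    simp only [mem_filter]
    constructor
    · exact fun ⟨hq, hqp⟩ => ⟨(hagree q (h₁.1 hq) hqp).1 hq, hqp⟩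
    · exact fun ⟨hq, hqp⟩ => ⟨(hagree q (h₂.1 hq) hqp).2 hq, hqp⟩
  exact hp (by rw [h₁.2 p hpP, h₂.2 p hpP, intensity_congr_of_filter_eq hpast])

theorem map (hS : IsThinningSolution μ Φ P S) (e : ℝ × ℝ ↪ ℝ × ℝ) (he : ∀ p, (e p).1 = p.1)
    (hsel : ∀ p ∈ P, (p.2 ≤ intensity μ Φ S p.1 ↔ (e p).2 ≤ intensity μ Φ S p.1)) :
    IsThinningSolution μ Φ (P.map e) (S.map e) := by
  refine ⟨map_subset_map.2 hS.1, fun _ hq => ?_⟩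
  obtain ⟨p, hp, rfl⟩ := mem_map.1 hq
  rw [mem_map', intensity_map e he, he, hS.2 p hp, hsel p hp]

theorem intensity_insert_eq {v θ : ℝ} (hS : IsThinningSolution μ Φ P S)
    (hS' : IsThinningSolution μ Φ (insert (v, θ) P) S') :
    intensity μ Φ S' v = intensity μ Φ S v := by
  have hP : (insert (v, θ) P).filter (fun q => q.1 < v) = P.filter (fun q => q.1 < v) := by
    rw [filter_insert, if_neg (lt_irrefl v)]
  have := (hS'.filter_lt v).unique (hP ▸ hS.filter_lt v)
  rw [← intensity_filter_lt_of_le le_rfl, this, intensity_filter_lt_of_le le_rfl]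

theorem image_fst_eq_of_le_intensity {v θ₁ θ₂ : ℝ}
    (h₁ : IsThinningSolution μ Φ (insert (v, θ₁) P) S₁)
    (h₂ : IsThinningSolution μ Φ (insert (v, θ₂) P) S₂) (hv : ∀ p ∈ P, p.1 ≠ v)
    (hθ₁ : θ₁ ≤ intensity μ Φ S₁ v) (hθ₂ : θ₂ ≤ intensity μ Φ S₁ v) :
    S₁.image Prod.fst = S₂.image Prod.fst := by
  set e := Equiv.swap (v, θ₁) (v, θ₂)
  have he : ∀ p, (e p).1 = p.1 := fun p => by
    rw [Equiv.swap_apply_def]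
    split_ifs with h₁ h₂ <;> simp [h₁, h₂]
  have heP : ∀ p ∈ P, e p = p := fun p hp =>
    Equiv.swap_apply_of_ne_of_ne (fun h => hv p hp (by rw [h])) (fun h => hv p hp (by rw [h]))
  have hmap : (insert (v, θ₁) P).map e.toEmbedding = insert (v, θ₂) P := by
    rw [map_insert, map_eq_image, Equiv.coe_toEmbedding, Equiv.swap_apply_left,
      image_congr heP, image_id']
  have hsol := h₁.map e.toEmbedding he (fun p hp => by
    rcases mem_insert.1 hp with rfl | hpP
    · simp [e, hθ₁, hθ₂]
    · simp [heP p hpP])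
  rw [hmap] at hsol
  rw [← hsol.unique h₂, map_eq_image, image_image]
  congr 1
  funext p
  exact (he p).symm

end IsThinningSolution

end

theorem thinning_integral_mark_invariance_general
    (μ Φ : ℝ → ℝ) (hμ : ∀ t, 0 ≤ μ t) (hΦ : ∀ t, 0 ≤ Φ t)
    (P : Finset (ℝ × ℝ))
    (S : Finset (ℝ × ℝ)) (hS : IsThinningSolution μ Φ P S)
    (v : ℝ)
    (hvfresh : ∀ p ∈ P, p.1 ≠ v)
    (G : Finset ℝ → ℝ)
    (Sθ : ℝ → Finset (ℝ × ℝ))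
    (hSθ : ∀ θ, 0 ≤ θ → IsThinningSolution μ Φ (insert (v, θ) P) (Sθ θ)) :
    ∫ θ in Set.Ici (0:ℝ),
        (if θ ≤ intensity μ Φ S v then G ((Sθ θ).image Prod.fst) else 0)
      = intensity μ Φ S v * G ((Sθ 0).image Prod.fst) := by
  set Λ := intensity μ Φ S v
  have hΛ : 0 ≤ Λ := intensity_nonneg hμ hΦ S v
  have hΛθ : ∀ θ, 0 ≤ θ → intensity μ Φ (Sθ θ) v = Λ := fun θ hθ =>
    hS.intensity_insert_eq (hSθ θ hθ)
  have hτ : ∀ θ, 0 ≤ θ → θ ≤ Λ → (Sθ θ).image Prod.fst = (Sθ 0).image Prod.fst :=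
    fun θ hθ hθΛ => (hSθ θ hθ).image_fst_eq_of_le_intensity (hSθ 0 le_rfl) hvfresh
      (by rwa [hΛθ θ hθ]) (by rwa [hΛθ θ hθ])
  have hintegrand : Set.EqOn
      (fun θ => if θ ≤ Λ then G ((Sθ θ).image Prod.fst) else 0)
      ((Set.Iic Λ).indicator fun _ => G ((Sθ 0).image Prod.fst)) (Set.Ici 0) := by
    intro θ hθ
    dsimp only
    by_cases hθΛ : θ ≤ Λ
    · rw [if_pos hθΛ, Set.indicator_of_mem (Set.mem_Iic.2 hθΛ), hτ θ hθ hθΛ]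
    · rw [if_neg hθΛ, Set.indicator_of_notMem (Set.notMem_Iic.2 (not_le.1 hθΛ))]
  rw [setIntegral_congr_fun measurableSet_Ici hintegrand,
    setIntegral_indicator measurableSet_Iic, Set.Ici_inter_Iic, setIntegral_const,
    Real.volume_real_Icc_of_le hΛ, sub_zero, smul_eq_mul]

/-- Integral mark-invariance identity (pathwise form of Lemma 3.8): for a fresh
time `v` and any functional `G` of the set of selected times,
`∫₀^∞ 1_{θ ≤ Λ^S(v)} G(τ(S_θ)) dθ = Λ^S(v) · G(τ(S_0))`, where `S_θ` is the
thinning solution of `(P ∪ {(v,θ)}, μ, Φ)` and `τ(S_θ)` its set of selected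
time coordinates. -/
theorem thinning_integral_mark_invariance
    (T : ℝ) (hT : 0 < T)
    (μ Φ : ℝ → ℝ) (hμ : ∀ t, 0 ≤ μ t) (hΦ : ∀ t, 0 ≤ Φ t)
    (P : Finset (ℝ × ℝ)) (hP : IsConfig T P)
    (S : Finset (ℝ × ℝ)) (hS : IsThinningSolution μ Φ P S)
    (v : ℝ) (hv0 : 0 < v) (hvT : v ≤ T)
    (hvfresh : ∀ p ∈ P, p.1 ≠ v)
    (G : Finset ℝ → ℝ)
    (Sθ : ℝ → Finset (ℝ × ℝ))
    (hSθ : ∀ θ, 0 ≤ θ → IsThinningSolution μ Φ (insert (v, θ) P) (Sθ θ)) :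
    ∫ θ in Set.Ici (0:ℝ),
        (if θ ≤ intensity μ Φ S v then G ((Sθ θ).image Prod.fst) else 0)
      = intensity μ Φ S v * G ((Sθ 0).image Prod.fst) :=
  thinning_integral_mark_invariance_general μ Φ hμ hΦ P S hS v hvfresh G Sθ hSθ
end
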